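/- arXiv:2512.02105 — 2 statements merged into one kernel-verified Lean document; each statement's English description precedes it below -/
import Mathlib

section
/- Let A be a unital ring in which 2 is invertible, and let Z, Z', K, K' ∈ A satisfy: Z² = Z'² = K² = K'² = 1; Z and Z' commute with each other and with K and K'; and K K' = −K' K. Set U = (1+Z)/2 + K(1−Z)/2 and V = (1+Z')/2 + K'(1−Z')/2. Then (UV)² = 1 − (1−Z)(1−Z')/2. -/
/-!
Write `p = (1 - Z)/2` and `q = (1 - Z')/2`; these are commuting idempotents commuting with `K`
and `K'`, and `U = 1 + (K - 1) p`, `V = 1 + (K' - 1) q` act as `K`, resp. `K'`, on the ranges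
of `p`, resp. `q`, and as the identity elsewhere. Both are involutions, so `(UV)² = UV (VU)⁻¹`
is a group commutator, and `(UV)² = 1 + UV (UV - VU)`. The ring commutator `UV - VU` is
`(KK' - K'K) pq`, and on the range of `pq` the product `UV` acts as `KK'`; since `K`, `K'` are
anticommuting involutions, `KK' (KK' - K'K) = -2`, whence `(UV)² = 1 - 2pq`.
-/

section Controlled

variable {R : Type*} [Ring R] {p q a b : R}

/-- The gate acting as `a` on the range of the idempotent `p` and as the identity on the range
of `1 - p`. -/
def controlled (p a : R) : R := 1 + (a - 1) * p

@[simp]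
lemma controlled_one (p : R) : controlled p 1 = 1 := by
  simp [controlled]

lemma controlled_mul (hp : IsIdempotentElem p) (hpb : Commute p b) :
    controlled p a * controlled p b = controlled p (a * b) := by
  have h : (a - 1) * p * ((b - 1) * p) = (a - 1) * (b - 1) * p := by
    rw [mul_assoc, ← mul_assoc p, (hpb.sub_right (Commute.one_right p)).eq, mul_assoc,
      hp.eq, ← mul_assoc]
  simp only [controlled, add_mul, mul_add, one_mul, mul_one, h]
  noncomm_ring

lemma controlled_mul_self (hp : IsIdempotentElem p) (hpa : Commute p a) (ha : a * a = 1) :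
    controlled p a * controlled p a = 1 := by
  rw [controlled_mul hp hpa, ha, controlled_one]

lemma controlled_mul_idempotent_mul (hp : IsIdempotentElem p) (x : R) :
    controlled p a * (p * x) = a * (p * x) := by
  simp only [controlled, add_mul, one_mul, mul_assoc, ← mul_assoc p, hp.eq]
  noncomm_ring

lemma controlled_commutator (hpq : Commute p q) (hpb : Commute p b) (hqa : Commute q a) :
    controlled p a * controlled q b - controlled q b * controlled p a =
      (a * b - b * a) * (p * q) := by
  have hab : (a - 1) * p * ((b - 1) * q) = (a - 1) * (b - 1) * (p * q) := by
    rw [mul_assoc, ← mul_assoc p, (hpb.sub_right (Commute.one_right p)).eq,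
      mul_assoc, ← mul_assoc]
  have hba : (b - 1) * q * ((a - 1) * p) = (b - 1) * (a - 1) * (p * q) := by
    rw [mul_assoc, ← mul_assoc q, (hqa.sub_right (Commute.one_right q)).eq,
      mul_assoc, ← mul_assoc, hpq.symm.eq]
  simp only [controlled, add_mul, mul_add, one_mul, mul_one, hab, hba]
  noncomm_ring

lemma mul_mul_sub_mul_eq_neg_two (ha : a * a = 1) (hb : b * b = 1) (hab : a * b = -(b * a)) :
    a * b * (a * b - b * a) = -2 := by
  have hbb : a * b * (b * a) = 1 := by rw [mul_assoc, ← mul_assoc b, hb, one_mul, ha]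
  rw [mul_sub, hbb]
  nth_rewrite 2 [hab]
  rw [mul_neg, hbb]
  norm_num

theorem controlled_mul_controlled_sq (hp : IsIdempotentElem p) (hq : IsIdempotentElem q)
    (hpq : Commute p q) (hpa : Commute p a) (hpb : Commute p b) (hqa : Commute q a)
    (hqb : Commute q b) (ha : a * a = 1) (hb : b * b = 1) (hab : a * b = -(b * a)) :
    (controlled p a * controlled q b) ^ 2 = 1 - 2 * (p * q) := by
  set U := controlled p a
  set V := controlled q b
  have hinv : U * V * (V * U) = 1 := by
    rw [mul_assoc, ← mul_assoc V, controlled_mul_self hq hqb hb, one_mul,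
      controlled_mul_self hp hpa ha]
  have hrange : U * V * (p * q) = a * b * (p * q) :=
    calc U * V * (p * q) = U * (V * (q * p)) := by rw [mul_assoc, hpq.eq]
      _ = U * (p * (b * q)) := by
        rw [controlled_mul_idempotent_mul hq, ← hpq.eq, ← mul_assoc b, ← hpb.eq, mul_assoc]
      _ = a * b * (p * q) := by
        rw [controlled_mul_idempotent_mul hp, ← mul_assoc p, hpb.eq]
        simp only [mul_assoc]
  have hpq_comm : Commute (p * q) (a * b - b * a) :=
    ((hpa.mul_right hpb).sub_right (hpb.mul_right hpa)).mul_left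
      ((hqa.mul_right hqb).sub_right (hqb.mul_right hqa))
  calc (U * V) ^ 2 = U * V * (V * U + (U * V - V * U)) := by rw [sq, add_sub_cancel]
    _ = 1 + U * V * (p * q) * (a * b - b * a) := by
      rw [mul_add, hinv, controlled_commutator hpq hpb hqa, ← hpq_comm.eq]
      simp only [mul_assoc]
    _ = 1 - 2 * (p * q) := by
      rw [hrange, mul_assoc, hpq_comm.eq, ← mul_assoc, mul_mul_sub_mul_eq_neg_two ha hb hab,
        neg_mul, ← sub_eq_add_neg]

end Controlled

section InvOfTwo

variable {R : Type*} [Ring R] [Invertible (2 : R)] {Z x : R}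

lemma Commute.invOf_two_left (x : R) : Commute (⅟2 : R) x :=
  (Commute.ofNat_left 2 x).invOf_left

lemma Commute.one_sub_mul_invOf_two_right (h : Commute x Z) : Commute x ((1 - Z) * ⅟2) :=
  ((Commute.one_right x).sub_right h).mul_right (Commute.invOf_two_left x).symm

lemma Commute.one_sub_mul_invOf_two_left (h : Commute Z x) : Commute ((1 - Z) * ⅟2) x :=
  (h.symm.one_sub_mul_invOf_two_right).symm

lemma isIdempotentElem_one_sub_mul_invOf_two (hZ : Z * Z = 1) :
    IsIdempotentElem ((1 - Z) * ⅟2) := by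
  have hsq : (1 - Z) * (1 - Z) = (1 - Z) * 2 :=
    calc (1 - Z) * (1 - Z) = 1 - 2 * Z + Z * Z := by noncomm_ring
      _ = (1 - Z) * 2 := by rw [hZ]; noncomm_ring
  rw [IsIdempotentElem, mul_assoc, ← mul_assoc ⅟2, (Commute.invOf_two_left _).eq,
    mul_assoc, ← mul_assoc (1 - Z), hsq, mul_assoc, mul_invOf_cancel_left]

lemma controlled_one_sub_mul_invOf_two (K : R) :
    controlled ((1 - Z) * ⅟2) K = (1 + Z) * ⅟2 + K * ((1 - Z) * ⅟2) := by
  have h : (1 + Z) * ⅟2 = 1 - (1 - Z) * ⅟(2 : R) := by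
    rw [eq_sub_iff_add_eq, ← add_mul, add_add_sub_cancel, one_add_one_eq_two, mul_invOf_self]
  rw [controlled, h]
  noncomm_ring

end InvOfTwo

/-- Two controlled-parity gates with anticommuting controlled involutions compose
(squared) to the controlled-Z gate: `(UV)² = 1 − (1−Z)(1−Z')/2`. -/
theorem controlled_parity_gates_square
    {A : Type*} [Ring A] [Invertible (2 : A)]
    (Z Z' K K' : A)
    (hZ : Z ^ 2 = 1) (hZ' : Z' ^ 2 = 1) (hK : K ^ 2 = 1) (hK' : K' ^ 2 = 1)
    (hZZ' : Z * Z' = Z' * Z)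
    (hZK : Z * K = K * Z) (hZK' : Z * K' = K' * Z)
    (hZ'K : Z' * K = K * Z') (hZ'K' : Z' * K' = K' * Z')
    (hKK' : K * K' = -(K' * K))
    (U V : A)
    (hU : U = (1 + Z) * ⅟(2 : A) + K * ((1 - Z) * ⅟(2 : A)))
    (hV : V = (1 + Z') * ⅟(2 : A) + K' * ((1 - Z') * ⅟(2 : A))) :
    (U * V) ^ 2 = 1 - (1 - Z) * (1 - Z') * ⅟(2 : A) := by
  rw [sq] at hZ hZ' hK hK'
  rw [hU, hV, ← controlled_one_sub_mul_invOf_two, ← controlled_one_sub_mul_invOf_two,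
    controlled_mul_controlled_sq (isIdempotentElem_one_sub_mul_invOf_two hZ)
      (isIdempotentElem_one_sub_mul_invOf_two hZ')
      (.one_sub_mul_invOf_two_left (.one_sub_mul_invOf_two_right hZZ'))
      (.one_sub_mul_invOf_two_left hZK) (.one_sub_mul_invOf_two_left hZK')
      (.one_sub_mul_invOf_two_left hZ'K) (.one_sub_mul_invOf_two_left hZ'K') hK hK' hKK']
  rw [mul_assoc (1 - Z), ← mul_assoc (⅟2 : A), (Commute.invOf_two_left _).eq,
    (Commute.ofNat_left 2 _).eq]
  simp only [mul_assoc, invOf_mul_self, mul_one]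
end

section
/- Let A be a unital ℂ-algebra containing elements γ_A, γ_B, Z_A, Z_B with γ_A² = γ_B² = Z_A² = Z_B² = 1, and such that γ_B commutes with Z_B. Define z_X = (1 + i Z_X)/√2 for X ∈ {A, B} (so z_X² = i Z_X). Then (γ_A z_A γ_B z_B) · (Z_B z_B γ_B Z_A z_A γ_A) = −1. -/
/-!
The phase gate `z = (1 + i Z)/√2` is a polynomial in `Z`, so it commutes with `Z`, and
`z² = i Z` when `Z² = 1`; hence `z Z z = i`. In the product the middle factor `z_B Z_B z_B`
collapses to `i`, then `γ_B γ_B = 1` exposes `z_A Z_A z_A = i`, and `γ_A γ_A = 1` leaves `i² = -1`.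
-/

open Complex

section PhaseGate

variable {A : Type*} [Ring A] [Algebra ℂ A]

theorem inv_sqrt_two_mul_self : (√2 : ℂ)⁻¹ * (√2 : ℂ)⁻¹ = 2⁻¹ := by
  rw [← mul_inv, ← ofReal_mul, Real.mul_self_sqrt zero_le_two, ofReal_ofNat]

theorem sq_inv_sqrt_two_smul_one_add_I_smul {Z : A} (hZ : Z ^ 2 = 1) :
    ((√2 : ℂ)⁻¹ • (1 + I • Z)) ^ 2 = I • Z := by
  have hZZ : Z * Z = 1 := by rw [← sq, hZ]
  have hsq : (1 + I • Z) ^ 2 = (2 * I) • Z := by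
    simp only [sq, add_mul, mul_add, one_mul, mul_one, smul_mul_smul_comm, hZZ, I_mul_I]
    module
  rw [smul_pow, hsq, smul_smul, sq, inv_sqrt_two_mul_self, ← mul_assoc,
    inv_mul_cancel₀ two_ne_zero, one_mul]

theorem inv_sqrt_two_smul_one_add_I_smul_mul_mul_self {Z : A} (hZ : Z ^ 2 = 1) :
    (√2 : ℂ)⁻¹ • (1 + I • Z) * Z * ((√2 : ℂ)⁻¹ • (1 + I • Z)) = I • 1 := by
  have hcomm : Commute ((√2 : ℂ)⁻¹ • (1 + I • Z)) Z :=
    ((Commute.one_left Z).add_left ((Commute.refl Z).smul_left I)).smul_left _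
  rw [hcomm.eq, mul_assoc, ← sq, sq_inv_sqrt_two_smul_one_add_I_smul hZ, mul_smul_comm, ← sq, hZ]

end PhaseGate

theorem else_nayak_phase_minus_one_general
    {A : Type*} [Ring A] [Algebra ℂ A]
    (γA γB ZA ZB : A)
    (hγA : γA ^ 2 = 1) (hγB : γB ^ 2 = 1) (hZA : ZA ^ 2 = 1) (hZB : ZB ^ 2 = 1)
    (zA zB : A)
    (hzA : zA = ((Real.sqrt 2 : ℂ))⁻¹ • (1 + Complex.I • ZA))
    (hzB : zB = ((Real.sqrt 2 : ℂ))⁻¹ • (1 + Complex.I • ZB)) :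
    (γA * zA * γB * zB) * (ZB * zB * γB * ZA * zA * γA) = -1 := by
  have hA : zA * ZA * zA = I • 1 := hzA ▸ inv_sqrt_two_smul_one_add_I_smul_mul_mul_self hZA
  have hB : zB * ZB * zB = I • 1 := hzB ▸ inv_sqrt_two_smul_one_add_I_smul_mul_mul_self hZB
  calc (γA * zA * γB * zB) * (ZB * zB * γB * ZA * zA * γA)
      = γA * zA * γB * (zB * ZB * zB) * γB * ZA * zA * γA := by noncomm_ring
    _ = I • (γA * (zA * ZA * zA) * γA) := by
        rw [hB, mul_smul_comm, mul_one, smul_mul_assoc, mul_assoc _ γB γB, ← sq, hγB, mul_one]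
        simp only [smul_mul_assoc, mul_assoc]
    _ = -1 := by
        rw [hA, mul_smul_comm, mul_one, smul_mul_assoc, ← sq, hγA, smul_smul, I_mul_I,
          neg_one_smul]

/-- The Else–Nayak phase computation for two stacked copies:
`(γ_A z_A γ_B z_B) · (Z_B z_B γ_B Z_A z_A γ_A) = −1`, where
`z_X = (1 + i Z_X)/√2`. -/
theorem else_nayak_phase_minus_one
    {A : Type*} [Ring A] [Algebra ℂ A]
    (γA γB ZA ZB : A)
    (hγA : γA ^ 2 = 1) (hγB : γB ^ 2 = 1) (hZA : ZA ^ 2 = 1) (hZB : ZB ^ 2 = 1)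
    (hγBZB : γB * ZB = ZB * γB)
    (zA zB : A)
    (hzA : zA = ((Real.sqrt 2 : ℂ))⁻¹ • (1 + Complex.I • ZA))
    (hzB : zB = ((Real.sqrt 2 : ℂ))⁻¹ • (1 + Complex.I • ZB)) :
    (γA * zA * γB * zB) * (ZB * zB * γB * ZA * zA * γA) = -1 :=
  else_nayak_phase_minus_one_general γA γB ZA ZB hγA hγB hZA hZB zA zB hzA hzB
end
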